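/- arXiv:1212.6004 — 4 statements merged into one kernel-verified Lean document; each statement's English description precedes it below -/
import Mathlib

section
/- Let k be a field, let A and B be associative unital k-algebras, let M be a simple A-module such that every A-linear endomorphism of M is multiplication by a scalar from k, and let N be a simple B-module. Then the tensor product M ⊗[k] N, with the A ⊗[k] B-module structure determined by (a ⊗ b) · (m ⊗ n) = (a · m) ⊗ (b · n), is a simple A ⊗[k] B-module. -/
/-!
Since every `A`-endomorphism of `M` is a scalar, every `k`-linear endomorphism of `M` commutes
with `End_A M`, so by Jacobson density it agrees with the action of some `a : A` on any finite
set. Hence a submodule of `M ⊗[k] N` is stable under `g ⊗ id` for every `k`-linear `g`. Taking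
`g = b_i^* (·) • b_i` for a `k`-basis `b` of `M` turns a nonzero element into a nonzero pure tensor
`b_i ⊗ n`, and a pure tensor of nonzero vectors generates everything because `M` and `N` are
simple.
-/

open TensorProduct

theorem exists_smul_eq_of_forall_end_eq_smul {k A M : Type*} [Semiring k] [Ring A]
    [AddCommGroup M] [Module k M] [Module A M] [IsSemisimpleModule A M]
    (hschur : ∀ f : M →ₗ[A] M, ∃ c : k, ∀ m : M, f m = c • m)
    (g : M →ₗ[k] M) (s : Finset M) : ∃ a : A, ∀ m ∈ s, g m = a • m :=
  jacobson_density
    { toFun := g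
      map_add' := g.map_add
      map_smul' := fun f m => by
        obtain ⟨c, hc⟩ := hschur f
        simp only [Module.End.smul_def, hc, map_smul, RingHom.id_apply] } s

theorem LinearMap.rTensor_smulRight_apply {R M N : Type*} [CommSemiring R]
    [AddCommMonoid M] [Module R M] [AddCommMonoid N] [Module R N]
    (φ : M →ₗ[R] R) (m : M) (t : M ⊗[R] N) :
    (φ.smulRight m).rTensor N t = m ⊗ₜ[R] TensorProduct.lid R N (φ.rTensor N t) := by
  induction t with
  | zero => simp
  | tmul x n => simp [smul_tmul]
  | add x y hx hy => simp only [map_add, hx, hy, tmul_add]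

section tensor

variable {k A B M N : Type*} [CommRing k] [Ring A] [Algebra k A] [Ring B] [Algebra k B]
  [AddCommGroup M] [Module k M] [Module A M] [AddCommGroup N] [Module k N] [Module B N]
  [Module (A ⊗[k] B) (M ⊗[k] N)]

theorem exists_tmul_one_smul_eq_rTensor
    (hsmul : ∀ (a : A) (b : B) (m : M) (n : N),
      (a ⊗ₜ[k] b) • (m ⊗ₜ[k] n) = (a • m) ⊗ₜ[k] (b • n))
    [IsSemisimpleModule A M] (hschur : ∀ f : M →ₗ[A] M, ∃ c : k, ∀ m : M, f m = c • m)
    (g : M →ₗ[k] M) (t : M ⊗[k] N) : ∃ a : A, (a ⊗ₜ[k] (1 : B)) • t = g.rTensor N t := by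
  obtain ⟨S, rfl⟩ := exists_finsupp_left t
  obtain ⟨a, ha⟩ := exists_smul_eq_of_forall_end_eq_smul hschur g S.support
  refine ⟨a, ?_⟩
  simp only [Finsupp.sum, Finset.smul_sum, map_sum, hsmul, one_smul, LinearMap.rTensor_tmul]
  exact Finset.sum_congr rfl fun m hm => by rw [ha m hm]

theorem eq_top_of_tmul_mem
    (hsmul : ∀ (a : A) (b : B) (m : M) (n : N),
      (a ⊗ₜ[k] b) • (m ⊗ₜ[k] n) = (a • m) ⊗ₜ[k] (b • n))
    [IsSimpleModule A M] [IsSimpleModule B N] {P : Submodule (A ⊗[k] B) (M ⊗[k] N)}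
    {m : M} {n : N} (hm : m ≠ 0) (hn : n ≠ 0) (hP : m ⊗ₜ[k] n ∈ P) : P = ⊤ := by
  rw [eq_top_iff]
  rintro t -
  induction t with
  | zero => exact P.zero_mem
  | tmul m' n' =>
    obtain ⟨a, rfl⟩ := IsSimpleModule.toSpanSingleton_surjective A hm m'
    obtain ⟨b, rfl⟩ := IsSimpleModule.toSpanSingleton_surjective B hn n'
    simpa [hsmul] using P.smul_mem (a ⊗ₜ[k] b) hP
  | add x y hx hy => exact P.add_mem hx hy

end tensor

theorem simple_tensor_of_schur_simple_general
    (k A B M N : Type*) [Field k]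
    [Ring A] [Algebra k A] [Ring B] [Algebra k B]
    [AddCommGroup M] [Module k M] [Module A M]
    [AddCommGroup N] [Module k N] [Module B N]
    [Module (A ⊗[k] B) (M ⊗[k] N)]
    (hsmul : ∀ (a : A) (b : B) (m : M) (n : N),
      (a ⊗ₜ[k] b) • (m ⊗ₜ[k] n) = (a • m) ⊗ₜ[k] (b • n))
    (hM : IsSimpleModule A M)
    (hschur : ∀ f : M →ₗ[A] M, ∃ c : k, ∀ m : M, f m = c • m)
    (hN : IsSimpleModule B N) :
    IsSimpleModule (A ⊗[k] B) (M ⊗[k] N) := by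
  classical
  have := IsSimpleModule.nontrivial A M
  have := IsSimpleModule.nontrivial B N
  refine (isSimpleModule_iff _ _).mpr
    { eq_bot_or_eq_top := fun P => or_iff_not_imp_left.mpr fun hP => ?_ }
  obtain ⟨t, htP, ht⟩ := P.ne_bot_iff.mp hP
  let b := Module.Basis.ofVectorSpace k M
  obtain ⟨i, hi⟩ : ∃ i, equivFinsuppOfBasisLeft b t i ≠ 0 := by
    by_contra! h
    exact ht ((equivFinsuppOfBasisLeft b).map_eq_zero_iff.mp (Finsupp.ext h))
  obtain ⟨a, ha⟩ :=
    exists_tmul_one_smul_eq_rTensor hsmul hschur ((b.coord i).smulRight (b i)) t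
  refine eq_top_of_tmul_mem hsmul (b.ne_zero i) hi ?_
  rw [equivFinsuppOfBasisLeft_apply, ← LinearMap.rTensor_smulRight_apply, ← ha]
  exact P.smul_mem _ htP

/-- Let `k` be a field, `A` and `B` associative unital `k`-algebras,
`M` a simple `A`-module such that every `A`-linear endomorphism of `M` is multiplication
by a scalar from `k`, and `N` a simple `B`-module.  Then `M ⊗[k] N`, with the
`A ⊗[k] B`-module structure determined by `(a ⊗ b) • (m ⊗ n) = (a • m) ⊗ (b • n)`,
is a simple `A ⊗[k] B`-module. -/
theorem simple_tensor_of_schur_simple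
    (k A B M N : Type*) [Field k]
    [Ring A] [Algebra k A] [Ring B] [Algebra k B]
    [AddCommGroup M] [Module k M] [Module A M] [IsScalarTower k A M]
    [AddCommGroup N] [Module k N] [Module B N] [IsScalarTower k B N]
    [Module (A ⊗[k] B) (M ⊗[k] N)]
    (hsmul : ∀ (a : A) (b : B) (m : M) (n : N),
      (a ⊗ₜ[k] b) • (m ⊗ₜ[k] n) = (a • m) ⊗ₜ[k] (b • n))
    (hM : IsSimpleModule A M)
    (hschur : ∀ f : M →ₗ[A] M, ∃ c : k, ∀ m : M, f m = c • m)
    (hN : IsSimpleModule B N) :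
    IsSimpleModule (A ⊗[k] B) (M ⊗[k] N) :=
  simple_tensor_of_schur_simple_general k A B M N hsmul hM hschur hN
end

section
/- Let k be an algebraically closed field, let A and B be associative unital k-algebras, and let V be a simple A ⊗[k] B-module that is finite-dimensional over k. Then there exist a finite-dimensional simple A-module M and a finite-dimensional simple B-module N such that V is isomorphic, as an A ⊗[k] B-module, to M ⊗[k] N with the module structure determined by (a ⊗ b) · (m ⊗ n) = (a · m) ⊗ (b · n). -/
open scoped TensorProduct

universe u

/-- A `k`-vector space together with a compatible `A`-module structure,
for a `k`-algebra `A`. -/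
structure ModuleOver (k A : Type u) [Field k] [Ring A] [Algebra k A] where
  /-- The underlying type. -/
  carrier : Type u
  [ab : AddCommGroup carrier]
  [modk : Module k carrier]
  [modA : Module A carrier]
  [tower : IsScalarTower k A carrier]

attribute [instance] ModuleOver.ab ModuleOver.modk ModuleOver.modA ModuleOver.tower

/-- Auxiliary predicate: given a module structure of `A ⊗[k] B` on `M.carrier ⊗[k] N.carrier`,
it satisfies `(a ⊗ b) • (m ⊗ n) = (a • m) ⊗ (b • n)` and `V` is isomorphic, as an
`A ⊗[k] B`-module, to `M.carrier ⊗[k] N.carrier`. -/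
def IsTensorDecompAux (k A B : Type u) [Field k] [Ring A] [Algebra k A] [Ring B] [Algebra k B]
    (V : Type u) [AddCommGroup V] [Module (A ⊗[k] B) V]
    (M : ModuleOver k A) (N : ModuleOver k B)
    [inst : Module (A ⊗[k] B) (M.carrier ⊗[k] N.carrier)] : Prop :=
  (∀ (a : A) (b : B) (m : M.carrier) (n : N.carrier),
      (a ⊗ₜ[k] b) • (m ⊗ₜ[k] n) = (a • m) ⊗ₜ[k] (b • n)) ∧
  Nonempty (V ≃ₗ[A ⊗[k] B] (M.carrier ⊗[k] N.carrier))

/-!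
Let `S` be a simple `A`-submodule of `V`. Its isotypic component is invariant under every
`A`-endomorphism, in particular under the action of `B`, so it is all of `V` and `V ≅ S ^ n` as
an `A`-module; by Schur's lemma over the algebraically closed field `k`, `Hom_A(S, V)` then has
dimension at most `n`. Evaluation `S ⊗ Hom_A(S, V) → V` is `A ⊗ B`-linear when `B` acts on
`Hom_A(S, V)` through `V`, hence surjective, hence bijective by counting dimensions. The same count
applied to `S ⊗ P → V` for a nonzero `B`-submodule `P` of `Hom_A(S, V)` forces `P` to be everything.
-/

open Module

theorem Submodule.subtype_ne_zero {R M : Type*} [Semiring R] [AddCommMonoid M] [Module R M]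
    {p : Submodule R M} (hp : p ≠ ⊥) : p.subtype ≠ 0 :=
  fun h => hp (eq_bot_iff.2 fun x hx => by simpa using LinearMap.congr_fun h ⟨x, hx⟩)

instance Submodule.finiteDimensional_of_isScalarTower {k A V : Type*} [Field k] [Ring A]
    [Algebra k A] [AddCommGroup V] [Module k V] [Module A V] [IsScalarTower k A V]
    [FiniteDimensional k V] (S : Submodule A V) : FiniteDimensional k S :=
  inferInstanceAs (FiniteDimensional k (S.restrictScalars k))

namespace TensorProduct

variable {k A B M N : Type*} [Field k] [Ring A] [Algebra k A] [Ring B] [Algebra k B]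
  [AddCommGroup M] [Module k M] [Module A M] [IsScalarTower k A M]
  [AddCommGroup N] [Module k N] [Module B N] [IsScalarTower k B N]

variable (k A B M N) in
def externalAction : A ⊗[k] B →ₐ[k] Module.End k (M ⊗[k] N) :=
  Module.endTensorEndAlgHom.comp
    (Algebra.TensorProduct.map (Algebra.lsmul k k M) (Algebra.lsmul k k N))

variable (k A B M N) in
abbrev externalModule : Module (A ⊗[k] B) (M ⊗[k] N) :=
  Module.compHom _ (externalAction k A B M N).toRingHom

attribute [local instance] externalModule

instance isScalarTower_externalModule : IsScalarTower k (A ⊗[k] B) (M ⊗[k] N) where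
  smul_assoc c t x := LinearMap.congr_fun (map_smul (externalAction k A B M N) c t) x

theorem tmul_smul_tmul (a : A) (b : B) (m : M) (n : N) :
    (a ⊗ₜ[k] b) • (m ⊗ₜ[k] n) = (a • m) ⊗ₜ[k] (b • n) :=
  rfl

end TensorProduct

attribute [local instance] TensorProduct.externalModule

section CommutingActions

variable {k A B V : Type*} [Field k] [Ring A] [Algebra k A] [Ring B] [Algebra k B]
  [AddCommGroup V] [Module A V] [Module B V] [Module (A ⊗[k] B) V]

theorem Submodule.eq_top_of_smul_mem [IsSimpleModule (A ⊗[k] B) V]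
    (hV : ∀ (a : A) (b : B) (v : V), (a ⊗ₜ[k] b) • v = a • b • v) {W : Submodule A V}
    (hW : W ≠ ⊥) (hWB : ∀ (b : B), ∀ v ∈ W, b • v ∈ W) : W = ⊤ := by
  let W' : Submodule (A ⊗[k] B) V :=
    { W.toAddSubmonoid with
      smul_mem' t v hv := by
        induction t using TensorProduct.induction_on with
        | zero => simp
        | tmul a b => rw [hV]; exact W.smul_mem a (hWB b v hv)
        | add t t' ht ht' => rw [add_smul]; exact W.add_mem ht ht' }
  have hW' : W' = ⊤ := (eq_bot_or_eq_top W').resolve_left fun h =>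
    hW ((Submodule.eq_bot_iff W).2 fun v hv => (Submodule.eq_bot_iff W').1 h v hv)
  exact Submodule.eq_top_iff'.2 fun v => (Submodule.eq_top_iff'.1 hW' v : v ∈ W')

theorem isotypicComponent_eq_top [IsSimpleModule (A ⊗[k] B) V] [SMulCommClass A B V]
    (hV : ∀ (a : A) (b : B) (v : V), (a ⊗ₜ[k] b) • v = a • b • v) (S : Submodule A V)
    [IsSimpleModule A S] : isotypicComponent A V S = ⊤ :=
  have := SMulCommClass.symm A B V
  Submodule.eq_top_of_smul_mem hV (bot_lt_isotypicComponent S).ne' fun b _ hv =>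
    Submodule.IsFullyInvariant.isotypicComponent A V S (DistribSMul.toLinearMap A V b) hv

theorem exists_linearEquiv_fin_pi [Module k V] [IsScalarTower k A V] [FiniteDimensional k V]
    [IsSimpleModule (A ⊗[k] B) V] [SMulCommClass A B V]
    (hV : ∀ (a : A) (b : B) (v : V), (a ⊗ₜ[k] b) • v = a • b • v)
    (S : Submodule A V) [IsSimpleModule A S] : ∃ n : ℕ, Nonempty (V ≃ₗ[A] (Fin n → S)) := by
  have htop := isotypicComponent_eq_top hV S
  have : IsSemisimpleModule A V := .congr (LinearEquiv.ofTop _ htop).symm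
  have : Module.Finite A V := .of_restrictScalars_finite k A V
  exact (IsIsotypicOfType.of_isotypicComponent_eq_top htop).linearEquiv_fun

end CommutingActions

section Schur

variable {k A S V : Type*} [Field k] [IsAlgClosed k] [Ring A] [Algebra k A]
  [AddCommGroup S] [Module k S] [Module A S] [IsScalarTower k A S] [FiniteDimensional k S]
  [IsSimpleModule A S] [AddCommGroup V] [Module k V] [Module A V] [IsScalarTower k A V]

theorem finrank_linearMap_le_of_linearEquiv_pi {n : ℕ} (e : V ≃ₗ[A] (Fin n → S)) :
    finrank k (S →ₗ[A] V) ≤ n := by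
  let Φ : (S →ₗ[A] V) →ₗ[k] (Fin n → Module.End A S) :=
    { toFun f i := (LinearMap.proj i ∘ₗ e.toLinearMap) ∘ₗ f
      map_add' f g := by ext; simp
      map_smul' c f := by ext i m; exact congr_fun (e.toLinearMap.map_smul_of_tower c (f m)) i }
  have hΦ : Function.Injective Φ := fun f g h => LinearMap.ext fun m =>
    e.injective <| funext fun i => LinearMap.congr_fun (congr_fun h i) m
  let endEquiv : Module.End A S ≃ₗ[k] k := (LinearEquiv.ofBijective (Algebra.linearMap k _)
    (IsSimpleModule.algebraMap_end_bijective_of_isAlgClosed k)).symm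
  calc finrank k (S →ₗ[A] V) ≤ finrank k (Fin n → Module.End A S) :=
        LinearMap.finrank_le_finrank_of_injective hΦ
    _ = n := by rw [(LinearEquiv.piCongrRight fun _ => endEquiv).finrank_eq, finrank_fin_fun]

end Schur

section Evaluation

variable {k A B S N V : Type*} [Field k] [Ring A] [Algebra k A] [Ring B] [Algebra k B]
  [AddCommGroup S] [Module k S] [Module A S] [IsScalarTower k A S]
  [AddCommGroup N] [Module k N] [Module B N] [IsScalarTower k B N]
  [AddCommGroup V] [Module k V] [Module A V] [Module B V] [Module (A ⊗[k] B) V]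
  [IsScalarTower k A V] [IsScalarTower k B V] [SMulCommClass A B V]

def tensorEval (hV : ∀ (a : A) (b : B) (v : V), (a ⊗ₜ[k] b) • v = a • b • v)
    (g : N →ₗ[B] (S →ₗ[A] V)) : S ⊗[k] N →ₗ[A ⊗[k] B] V :=
  { TensorProduct.lift (LinearMap.restrictScalarsₗ k A S V k ∘ₗ g.restrictScalars k).flip with
    map_smul' t x := by
      induction t using TensorProduct.induction_on with
      | zero => simp
      | tmul a b =>
        induction x using TensorProduct.induction_on with
        | zero => simp
        | tmul m n =>
          simpa [TensorProduct.tmul_smul_tmul, hV] using (smul_comm a b (g n m)).symm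
        | add x y hx hy => simp_all [smul_add]
      | add t t' ht ht' => simp_all [add_smul] }

@[simp]
theorem tensorEval_tmul (hV : ∀ (a : A) (b : B) (v : V), (a ⊗ₜ[k] b) • v = a • b • v)
    (g : N →ₗ[B] (S →ₗ[A] V)) (m : S) (n : N) : tensorEval hV g (m ⊗ₜ n) = g n m :=
  rfl

theorem tensorEval_surjective [IsSimpleModule (A ⊗[k] B) V]
    (hV : ∀ (a : A) (b : B) (v : V), (a ⊗ₜ[k] b) • v = a • b • v)
    {g : N →ₗ[B] (S →ₗ[A] V)} (hg : g ≠ 0) : Function.Surjective (tensorEval hV g) := by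
  rw [← LinearMap.range_eq_top]
  refine (eq_bot_or_eq_top _).resolve_left fun h => hg ?_
  ext n m
  have := LinearMap.mem_range_self (tensorEval hV g) (m ⊗ₜ n)
  rwa [h, Submodule.mem_bot, tensorEval_tmul] at this

theorem finrank_le_mul_finrank_of_ne_zero [IsScalarTower k (A ⊗[k] B) V]
    [FiniteDimensional k S] [FiniteDimensional k N] [IsSimpleModule (A ⊗[k] B) V]
    (hV : ∀ (a : A) (b : B) (v : V), (a ⊗ₜ[k] b) • v = a • b • v)
    {g : N →ₗ[B] (S →ₗ[A] V)} (hg : g ≠ 0) : finrank k V ≤ finrank k S * finrank k N := by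
  rw [← finrank_tensorProduct]
  exact LinearMap.finrank_le_finrank_of_surjective (f := (tensorEval hV g).restrictScalars k)
    (tensorEval_surjective hV hg)

end Evaluation

section SimpleSubmodule

variable {k A B V : Type*} [Field k] [IsAlgClosed k] [Ring A] [Algebra k A] [Ring B]
  [Algebra k B] [AddCommGroup V] [Module k V] [Module A V] [Module B V] [Module (A ⊗[k] B) V]
  [IsScalarTower k A V] [IsScalarTower k B V] [IsScalarTower k (A ⊗[k] B) V]
  [SMulCommClass A B V] [FiniteDimensional k V] [IsSimpleModule (A ⊗[k] B) V]
  (S : Submodule A V) [IsSimpleModule A S]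

theorem nontrivial_linearMap : Nontrivial (S →ₗ[A] V) :=
  ⟨⟨S.subtype, 0, Submodule.subtype_ne_zero IsSimpleModule.isAtom.1⟩⟩

theorem linearMap_id_ne_zero : (LinearMap.id : (S →ₗ[A] V) →ₗ[B] (S →ₗ[A] V)) ≠ 0 :=
  fun h => Submodule.subtype_ne_zero IsSimpleModule.isAtom.1 (LinearMap.congr_fun h S.subtype)

theorem finrank_eq_mul_finrank_linearMap
    (hV : ∀ (a : A) (b : B) (v : V), (a ⊗ₜ[k] b) • v = a • b • v) :
    finrank k V = finrank k S * finrank k (S →ₗ[A] V) := by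
  obtain ⟨n, ⟨e⟩⟩ := exists_linearEquiv_fin_pi hV S
  refine le_antisymm (finrank_le_mul_finrank_of_ne_zero hV (linearMap_id_ne_zero S)) ?_
  calc finrank k S * finrank k (S →ₗ[A] V)
      ≤ finrank k S * n := Nat.mul_le_mul_left _ (finrank_linearMap_le_of_linearEquiv_pi e)
    _ = finrank k V := by
        simp [(e.restrictScalars k).finrank_eq, finrank_pi_fintype, mul_comm]

theorem isSimpleModule_linearMap
    (hV : ∀ (a : A) (b : B) (v : V), (a ⊗ₜ[k] b) • v = a • b • v) :
    IsSimpleModule B (S →ₗ[A] V) := by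
  have := nontrivial_linearMap S
  have : Nontrivial (Submodule B (S →ₗ[A] V)) := (Submodule.nontrivial_iff B).2 ‹_›
  have hS : 0 < finrank k S := have := IsSimpleModule.nontrivial A S; finrank_pos
  refine (isSimpleModule_iff B _).2 (.of_forall_eq_top fun P hP => ?_)
  have hle := finrank_le_mul_finrank_of_ne_zero hV (Submodule.subtype_ne_zero hP)
  rw [finrank_eq_mul_finrank_linearMap S hV, Nat.mul_le_mul_left_iff hS] at hle
  rw [← Submodule.restrictScalars_eq_top_iff k]
  exact Submodule.eq_top_of_finrank_eq (le_antisymm (Submodule.finrank_le _) hle)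

theorem tensorEval_id_bijective
    (hV : ∀ (a : A) (b : B) (v : V), (a ⊗ₜ[k] b) • v = a • b • v) :
    Function.Bijective (tensorEval hV (LinearMap.id : (S →ₗ[A] V) →ₗ[B] (S →ₗ[A] V))) := by
  have hsurj := tensorEval_surjective hV (linearMap_id_ne_zero S)
  refine ⟨?_, hsurj⟩
  have hrank : finrank k (S ⊗[k] (S →ₗ[A] V)) = finrank k V := by
    rw [finrank_tensorProduct, finrank_eq_mul_finrank_linearMap S hV]
  exact (LinearMap.injective_iff_surjective_of_finrank_eq_finrank hrank
    (f := (tensorEval hV LinearMap.id).restrictScalars k)).2 hsurj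

end SimpleSubmodule

/-- Let `k` be an algebraically closed field, `A`, `B` associative unital
`k`-algebras, and `V` a simple `A ⊗[k] B`-module that is finite-dimensional over `k`.  Then
there exist a finite-dimensional simple `A`-module `M` and a finite-dimensional simple
`B`-module `N` such that `V ≅ M ⊗[k] N` as `A ⊗[k] B`-modules, where the module structure
on `M ⊗[k] N` is determined by `(a ⊗ b) • (m ⊗ n) = (a • m) ⊗ (b • n)`. -/
theorem exists_tensor_decomposition_of_simple
    (k A B : Type u) [Field k] [IsAlgClosed k]
    [Ring A] [Algebra k A] [Ring B] [Algebra k B]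
    (V : Type u) [AddCommGroup V] [Module k V] [Module (A ⊗[k] B) V]
    [IsScalarTower k (A ⊗[k] B) V] [FiniteDimensional k V]
    (hV : IsSimpleModule (A ⊗[k] B) V) :
    ∃ (M : ModuleOver k A) (N : ModuleOver k B),
      FiniteDimensional k M.carrier ∧ IsSimpleModule A M.carrier ∧
      FiniteDimensional k N.carrier ∧ IsSimpleModule B N.carrier ∧
      ∃ inst : Module (A ⊗[k] B) (M.carrier ⊗[k] N.carrier),
        IsTensorDecompAux k A B V M N (inst := inst) := by
  let _ : Module A V :=
    Module.compHom V (Algebra.TensorProduct.includeLeftRingHom (R := k) (B := B))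
  let _ : Module B V :=
    Module.compHom V (Algebra.TensorProduct.includeRight (R := k) (A := A)).toRingHom
  have tmul_smul (a : A) (b : B) (v : V) : (a ⊗ₜ[k] b) • v = a • b • v := by
    change _ = (a ⊗ₜ[k] (1 : B)) • ((1 : A) ⊗ₜ[k] b) • v
    rw [← mul_smul, Algebra.TensorProduct.tmul_mul_tmul, mul_one, one_mul]
  have : IsScalarTower k A V := ⟨fun c a v => by
    change ((c • a) ⊗ₜ[k] (1 : B)) • v = c • (a ⊗ₜ[k] (1 : B)) • v
    rw [← TensorProduct.smul_tmul', smul_assoc]⟩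
  have : IsScalarTower k B V := ⟨fun c b v => by
    change ((1 : A) ⊗ₜ[k] (c • b)) • v = c • ((1 : A) ⊗ₜ[k] b) • v
    rw [TensorProduct.tmul_smul, smul_assoc]⟩
  have : SMulCommClass A B V := ⟨fun a b v => by
    rw [← tmul_smul]
    change _ = ((1 : A) ⊗ₜ[k] b) • (a ⊗ₜ[k] (1 : B)) • v
    rw [← mul_smul, Algebra.TensorProduct.tmul_mul_tmul, mul_one, one_mul]⟩
  have : IsArtinian A V := isArtinian_of_tower k inferInstance
  have : Nontrivial V := IsSimpleModule.nontrivial (A ⊗[k] B) V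
  obtain ⟨S, hS⟩ := IsAtomic.exists_atom (Submodule A V)
  have := isSimpleModule_iff_isAtom.2 hS
  exact ⟨⟨S⟩, ⟨S →ₗ[A] V⟩, inferInstance, this, inferInstance,
    isSimpleModule_linearMap S tmul_smul, _, TensorProduct.tmul_smul_tmul,
    ⟨(LinearEquiv.ofBijective _ (tensorEval_id_bijective S tmul_smul)).symm⟩⟩
end

section
/- Let k be a field, let A and B be associative unital k-algebras, and let V be a simple A ⊗[k] B-module. Regard V as an A-module via a · v = (a ⊗ 1) · v and as a B-module via b · v = (1 ⊗ b) · v. Let M ⊆ V be a simple A-submodule, and equip Hom_A(M, V) with the B-module structure (b · L)(m) = b · L(m). Let N ⊆ Hom_A(M, V) be a nonzero B-submodule such that M ⊗[k] N, with the A ⊗[k] B-module structure determined by (a ⊗ b) · (m ⊗ L) = (a · m) ⊗ (b · L), is a simple A ⊗[k] B-module. Then the evaluation map M ⊗[k] N → V sending m ⊗ L to L(m) is an isomorphism of A ⊗[k] B-modules. -/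
/-!
Evaluation `m ⊗ L ↦ L m` is `A ⊗[k] B`-linear, because `L` is `A`-linear and the `B`-action on
`Hom_A(M, V)` is pointwise. It is nonzero since `N` contains a nonzero `L`. A nonzero linear map
between simple modules is an isomorphism (Schur).
-/

open scoped TensorProduct

namespace TensorProduct

variable {k A B M V : Type*} [CommSemiring k] [Semiring A] [Algebra k A] [Semiring B] [Algebra k B]
  [AddCommMonoid V] [Module k V] [Module A V] [IsScalarTower k A V] [SMulCommClass A k V]
  [AddCommMonoid M] [Module k M] [Module A M] [IsScalarTower k A M]
  [Module B (M →ₗ[A] V)] [IsScalarTower k B (M →ₗ[A] V)]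

variable (k) in
def evalHom (N : Submodule B (M →ₗ[A] V)) : M ⊗[k] N →ₗ[k] V :=
  lift <| LinearMap.mk₂ k (fun m (L : N) => (L : M →ₗ[A] V) m)
    (fun _ _ _ => map_add _ _ _) (fun _ _ _ => by simp)
    (fun _ _ _ => rfl) (fun _ _ _ => rfl)

@[simp]
theorem evalHom_tmul (N : Submodule B (M →ₗ[A] V)) (m : M) (L : N) :
    evalHom k N (m ⊗ₜ L) = (L : M →ₗ[A] V) m :=
  rfl

theorem evalHom_ne_zero {N : Submodule B (M →ₗ[A] V)} (hN : N ≠ ⊥) : evalHom k N ≠ 0 := by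
  obtain ⟨L, hLN, hL⟩ := N.exists_mem_ne_zero_of_ne_bot hN
  obtain ⟨m, hm⟩ : ∃ m, L m ≠ 0 := not_forall.mp fun h => hL (LinearMap.ext h)
  exact fun h => hm (by simpa using LinearMap.congr_fun h (m ⊗ₜ[k] (⟨L, hLN⟩ : N)))

theorem evalHom_smul [Module (A ⊗[k] B) V] [SMul B V]
    (hAV : ∀ (a : A) (v : V), a • v = (a ⊗ₜ[k] (1 : B)) • v)
    (hBV : ∀ (b : B) (v : V), b • v = ((1 : A) ⊗ₜ[k] b) • v)
    (hBL : ∀ (b : B) (L : M →ₗ[A] V) (m : M), (b • L) m = b • (L m))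
    {N : Submodule B (M →ₗ[A] V)} [Module (A ⊗[k] B) (M ⊗[k] N)]
    (hsmul : ∀ (a : A) (b : B) (m : M) (L : N),
      (a ⊗ₜ[k] b) • (m ⊗ₜ[k] L) = (a • m) ⊗ₜ[k] (b • L))
    (r : A ⊗[k] B) (x : M ⊗[k] N) : evalHom k N (r • x) = r • evalHom k N x := by
  induction r using TensorProduct.induction_on with
  | zero => simp
  | add r s hr hs => rw [add_smul, map_add, hr, hs, add_smul]
  | tmul a b =>
    induction x using TensorProduct.induction_on with
    | zero => simp
    | add x y hx hy => rw [smul_add, map_add, hx, hy, map_add, smul_add]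
    | tmul m L =>
      rw [hsmul]
      calc evalHom k N ((a • m) ⊗ₜ[k] (b • L))
        _ = b • a • (L : M →ₗ[A] V) m := by
            rw [evalHom_tmul, Submodule.coe_smul, hBL, map_smul]
        _ = ((1 ⊗ₜ[k] b) * (a ⊗ₜ[k] 1)) • (L : M →ₗ[A] V) m := by rw [hBV, hAV, mul_smul]
        _ = (a ⊗ₜ[k] b) • evalHom k N (m ⊗ₜ[k] L) := by
            rw [Algebra.TensorProduct.tmul_mul_tmul, one_mul, mul_one, evalHom_tmul]

end TensorProduct

theorem evaluation_map_is_isomorphism_general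
    (k A B V : Type*) [Field k]
    [Ring A] [Algebra k A] [Ring B] [Algebra k B]
    [AddCommGroup V] [Module k V]
    [Module (A ⊗[k] B) V] (hV : IsSimpleModule (A ⊗[k] B) V)
    -- the induced `A`- and `B`-module structures on `V`
    [Module A V] (hAV : ∀ (a : A) (v : V), a • v = (a ⊗ₜ[k] (1 : B)) • v)
    [Module B V] (hBV : ∀ (b : B) (v : V), b • v = ((1 : A) ⊗ₜ[k] b) • v)
    [IsScalarTower k A V] [SMulCommClass A k V]
    -- a simple `A`-submodule `M ⊆ V`
    (M : Submodule A V)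
    -- the `B`-module structure on `Hom_A(M, V)` given by `(b • L) m = b • (L m)`
    [Module B (M →ₗ[A] V)]
    (hBL : ∀ (b : B) (L : M →ₗ[A] V) (m : M), (b • L) m = b • (L m))
    [IsScalarTower k B (M →ₗ[A] V)]
    -- a nonzero `B`-submodule `N ⊆ Hom_A(M, V)`
    (N : Submodule B (M →ₗ[A] V)) (hN : N ≠ ⊥)
    -- the `A ⊗[k] B`-module structure on `M ⊗[k] N`
    [Module (A ⊗[k] B) (M ⊗[k] N)]
    (hsmul : ∀ (a : A) (b : B) (m : M) (L : N),
      (a ⊗ₜ[k] b) • (m ⊗ₜ[k] L) = (a • m) ⊗ₜ[k] (b • L))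
    (hsimple : IsSimpleModule (A ⊗[k] B) (M ⊗[k] N)) :
    ∃ e : (M ⊗[k] N) ≃ₗ[A ⊗[k] B] V, ∀ (m : M) (L : N),
      e (m ⊗ₜ[k] L) = (L : M →ₗ[A] V) m := by
  have := hV
  have := hsimple
  let f : M ⊗[k] N →ₗ[A ⊗[k] B] V :=
    { TensorProduct.evalHom k N with
      map_smul' := TensorProduct.evalHom_smul hAV hBV hBL hsmul }
  have hf : f ≠ 0 := fun h =>
    TensorProduct.evalHom_ne_zero (k := k) hN <| LinearMap.ext fun x => LinearMap.congr_fun h x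
  exact ⟨.ofBijective f (LinearMap.bijective_of_ne_zero hf), fun _ _ => rfl⟩

/-- Let `k` be a field, `A`, `B` associative unital `k`-algebras and `V` a
simple `A ⊗[k] B`-module, regarded as an `A`-module via `a • v = (a ⊗ 1) • v` and as a
`B`-module via `b • v = (1 ⊗ b) • v`.  Let `M ⊆ V` be a simple `A`-submodule, equip
`Hom_A(M, V)` with the `B`-module structure `(b • L) m = b • L m`, and let
`N ⊆ Hom_A(M, V)` be a nonzero `B`-submodule such that `M ⊗[k] N`, with the `A ⊗[k] B`-module
structure determined by `(a ⊗ b) • (m ⊗ L) = (a • m) ⊗ (b • L)`, is a simple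
`A ⊗[k] B`-module.  Then the evaluation map `M ⊗[k] N → V`, `m ⊗ L ↦ L m`, is an
isomorphism of `A ⊗[k] B`-modules. -/
theorem evaluation_map_is_isomorphism
    (k A B V : Type*) [Field k]
    [Ring A] [Algebra k A] [Ring B] [Algebra k B]
    [AddCommGroup V] [Module k V]
    [Module (A ⊗[k] B) V] (hV : IsSimpleModule (A ⊗[k] B) V)
    -- the induced `A`- and `B`-module structures on `V`
    [Module A V] (hAV : ∀ (a : A) (v : V), a • v = (a ⊗ₜ[k] (1 : B)) • v)
    [Module B V] (hBV : ∀ (b : B) (v : V), b • v = ((1 : A) ⊗ₜ[k] b) • v)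
    [IsScalarTower k A V] [SMulCommClass A k V]
    -- a simple `A`-submodule `M ⊆ V`
    (M : Submodule A V) (hM : IsSimpleModule A M)
    -- the `B`-module structure on `Hom_A(M, V)` given by `(b • L) m = b • (L m)`
    [Module B (M →ₗ[A] V)]
    (hBL : ∀ (b : B) (L : M →ₗ[A] V) (m : M), (b • L) m = b • (L m))
    [IsScalarTower k B (M →ₗ[A] V)]
    -- a nonzero `B`-submodule `N ⊆ Hom_A(M, V)`
    (N : Submodule B (M →ₗ[A] V)) (hN : N ≠ ⊥)
    -- the `A ⊗[k] B`-module structure on `M ⊗[k] N`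
    [Module (A ⊗[k] B) (M ⊗[k] N)]
    (hsmul : ∀ (a : A) (b : B) (m : M) (L : N),
      (a ⊗ₜ[k] b) • (m ⊗ₜ[k] L) = (a • m) ⊗ₜ[k] (b • L))
    (hsimple : IsSimpleModule (A ⊗[k] B) (M ⊗[k] N)) :
    ∃ e : (M ⊗[k] N) ≃ₗ[A ⊗[k] B] V, ∀ (m : M) (L : N),
      e (m ⊗ₜ[k] L) = (L : M →ₗ[A] V) m :=
  evaluation_map_is_isomorphism_general k A B V hV hAV hBV M hBL N hN hsmul hsimple
end

section
/- Let k be an algebraically closed field, let A and B be associative unital k-algebras, and let V be a simple A ⊗[k] B-module that is finite-dimensional over k. Regard V as an A-module via a · v = (a ⊗ 1) · v, giving an algebra homomorphism from A to End_k(V). Then the image of A under this homomorphism is a semisimple ring. -/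
/-!
Let `R` be the image of `A` in `End_k V`. Each `1 ⊗ b` acts `R`-linearly on `V`, so every fully
invariant `R`-submodule of `V`, in particular the socle, is an `A ⊗ B`-submodule. The socle is
nonzero since `V` is finite-dimensional, hence it is all of `V` and `V` is a semisimple
`R`-module. Then the Jacobson radical of the Artinian ring `R` annihilates the faithful module `V`,
so it vanishes and `R` is semisimple.
-/

open scoped TensorProduct

section Socle

variable (R M : Type*) [Ring R] [AddCommGroup M] [Module R M]

def Submodule.socle : Submodule R M := sSup {m | IsSimpleModule R m}

variable {R M}

theorem isotypicComponent_le_socle (S : Submodule R M) [IsSimpleModule R S] :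
    isotypicComponent R M S ≤ Submodule.socle R M :=
  sSup_le_sSup fun _ ⟨e⟩ ↦ IsSimpleModule.congr e

theorem Submodule.socle_isFullyInvariant : (socle R M).IsFullyInvariant := fun f ↦
  sSup_le fun m (_ : IsSimpleModule R m) ↦ Submodule.map_le_iff_le_comap.mp <|
    (m.map_le_isotypicComponent f).trans (isotypicComponent_le_socle m)

theorem Submodule.socle_ne_bot [IsAtomic (Submodule R M)] [Nontrivial M] : socle R M ≠ ⊥ := by
  obtain ⟨m, hm⟩ := IsAtomic.exists_atom (Submodule R M)
  exact ne_bot_of_le_ne_bot hm.1 (le_sSup (isSimpleModule_iff_isAtom.mpr hm))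

end Socle

theorem IsSemisimpleModule.isSemisimpleRing_of_faithfulSMul (R M : Type*) [Ring R]
    [IsArtinianRing R] [AddCommGroup M] [Module R M] [FaithfulSMul R M]
    [IsSemisimpleModule R M] : IsSemisimpleRing R :=
  IsArtinianRing.isSemisimpleRing_iff_jacobson.mpr <| le_bot_iff.mp <|
    (jacobson_le_annihilator R M).trans (Module.annihilator_eq_bot.mpr ‹_›).le

namespace Algebra.TensorProduct

variable (k A B V : Type*) [CommRing k] [Ring A] [Algebra k A] [Ring B] [Algebra k B]
  [AddCommGroup V] [Module k V] [Module (A ⊗[k] B) V] [IsScalarTower k (A ⊗[k] B) V]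

abbrev lsmulIncludeLeft : A →ₐ[k] Module.End k V :=
  (Algebra.lsmul k k V).comp (includeLeft : A →ₐ[k] A ⊗[k] B)

variable {A V}

def lsmulOneTmul (b : B) : V →ₗ[(lsmulIncludeLeft k A B V).range] V where
  toFun v := ((1 : A) ⊗ₜ[k] b) • v
  map_add' := smul_add _
  map_smul' := by
    rintro ⟨_, a, rfl⟩ v
    change ((1 : A) ⊗ₜ[k] b) • (a ⊗ₜ[k] (1 : B)) • v = (a ⊗ₜ[k] (1 : B)) • ((1 : A) ⊗ₜ[k] b) • v
    rw [← mul_smul, ← mul_smul, tmul_mul_tmul, tmul_mul_tmul, one_mul, mul_one, one_mul, mul_one]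

variable {k B}

theorem _root_.Submodule.IsFullyInvariant.smul_mem_tensorProduct
    {N : Submodule (lsmulIncludeLeft k A B V).range V} (hN : N.IsFullyInvariant)
    (x : A ⊗[k] B) {v : V} (hv : v ∈ N) : x • v ∈ N := by
  induction x using TensorProduct.induction_on with
  | zero => simp
  | tmul a b =>
    have hb : ((1 : A) ⊗ₜ[k] b) • v ∈ N := hN (lsmulOneTmul k B b) hv
    have hab : (a ⊗ₜ[k] b) • v = (a ⊗ₜ[k] (1 : B)) • ((1 : A) ⊗ₜ[k] b) • v := by
      rw [← mul_smul, tmul_mul_tmul, mul_one, one_mul]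
    exact hab ▸ N.smul_mem ⟨lsmulIncludeLeft k A B V a, a, rfl⟩ hb
  | add x y hx hy => rw [add_smul]; exact N.add_mem hx hy

theorem _root_.Submodule.IsFullyInvariant.eq_bot_or_eq_top_of_isSimpleModule_tensorProduct
    [IsSimpleModule (A ⊗[k] B) V] {N : Submodule (lsmulIncludeLeft k A B V).range V}
    (hN : N.IsFullyInvariant) : N = ⊥ ∨ N = ⊤ := by
  let N' : Submodule (A ⊗[k] B) V :=
    { N.toAddSubmonoid with smul_mem' := fun x _ hv ↦ hN.smul_mem_tensorProduct x hv }
  have hN' : N'.toAddSubmonoid = N.toAddSubmonoid := rfl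
  rcases eq_bot_or_eq_top N' with h | h <;> [left; right] <;>
    exact Submodule.toAddSubmonoid_injective (by rw [← hN', h]; rfl)

end Algebra.TensorProduct

theorem image_in_end_isSemisimpleRing_general
    (k A B : Type*) [Field k]
    [Ring A] [Algebra k A] [Ring B] [Algebra k B]
    (V : Type*) [AddCommGroup V] [Module k V] [Module (A ⊗[k] B) V]
    [IsScalarTower k (A ⊗[k] B) V] [FiniteDimensional k V]
    (hV : IsSimpleModule (A ⊗[k] B) V) :
    IsSemisimpleRing
      ((Algebra.lsmul k k V : (A ⊗[k] B) →ₐ[k] Module.End k V).comp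
        (Algebra.TensorProduct.includeLeft : A →ₐ[k] A ⊗[k] B)).range := by
  set R := (Algebra.TensorProduct.lsmulIncludeLeft k A B V).range
  have : IsArtinian R V := isArtinian_of_tower k inferInstance
  have : Nontrivial V := IsSimpleModule.nontrivial (A ⊗[k] B) V
  have hsocle : Submodule.socle R V = ⊤ :=
    (Submodule.IsFullyInvariant.eq_bot_or_eq_top_of_isSimpleModule_tensorProduct
      Submodule.socle_isFullyInvariant).resolve_left Submodule.socle_ne_bot
  have : IsSemisimpleModule R V := .of_sSup_simples_eq_top hsocle
  have : IsArtinianRing R := .of_finite k R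
  exact IsSemisimpleModule.isSemisimpleRing_of_faithfulSMul R V

/-- Let `k` be an algebraically closed field, `A`, `B` associative unital
`k`-algebras, and `V` a simple `A ⊗[k] B`-module that is finite-dimensional over `k`.
Regard `V` as an `A`-module via `a • v = (a ⊗ 1) • v`; this gives the algebra homomorphism
`A → End_k V`, `a ↦ (v ↦ (a ⊗ 1) • v)`.  Then the image of `A` under this homomorphism is a
semisimple ring. -/
theorem image_in_end_isSemisimpleRing
    (k A B : Type*) [Field k] [IsAlgClosed k]
    [Ring A] [Algebra k A] [Ring B] [Algebra k B]
    (V : Type*) [AddCommGroup V] [Module k V] [Module (A ⊗[k] B) V]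
    [IsScalarTower k (A ⊗[k] B) V] [FiniteDimensional k V]
    (hV : IsSimpleModule (A ⊗[k] B) V) :
    IsSemisimpleRing
      ((Algebra.lsmul k k V : (A ⊗[k] B) →ₐ[k] Module.End k V).comp
        (Algebra.TensorProduct.includeLeft : A →ₐ[k] A ⊗[k] B)).range :=
  image_in_end_isSemisimpleRing_general k A B V hV
end
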